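/- Let 𝕂 be ℝ or ℂ and let r = (r_1,…,r_n) be a vector of positive reals that is admissible. Suppose F ∈ 𝕂^{d×n} is a critical point of Φ_r (∇Φ_r(F) = 0), all columns of F are nonzero, and F ∉ PF_d(r). Then there is a real eigenvalue λ of the frame operator F F* such that, letting E = {v ∈ 𝕂^d : F F* v = λ v} be its eigenspace, one has Σ_{i : f_i ∈ E} r_i > dim_𝕂 E. -/

import Mathlib

open scoped BigOperators Matrix

attribute [local instance] Matrix.normedAddCommGroup Matrix.normedSpace

/-- `r` is admissible. -/
def AdmissibleR (d n : ℕ) (r : Fin n → ℝ) : Prop :=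
  (∑ i, r i = d) ∧
    ∀ k : ℕ, 1 ≤ k → k ≤ d - 1 →
      ∀ I : Finset (Fin n), I.card = k → ∑ i ∈ I, r i ≤ k

/-- The total frame energy. -/
noncomputable def totalFrameEnergy {d n : ℕ} {𝕂 : Type*} [RCLike 𝕂]
    (r : Fin n → ℝ) (F : Matrix (Fin d) (Fin n) 𝕂) : ℝ :=
  (∑ i, ∑ j, ‖(F * Fᴴ - 1 : Matrix (Fin d) (Fin d) 𝕂) i j‖ ^ 2) +
    (1 / 4) * ∑ i, ((∑ j, ‖F j i‖ ^ 2) / r i - 1) ^ 2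

/-- The real Frobenius inner product `⟨X, Y⟩ = Re tr (Xᴴ Y)`, written entrywise. -/
noncomputable def frobInner {d n : ℕ} {𝕂 : Type*} [RCLike 𝕂]
    (X Y : Matrix (Fin d) (Fin n) 𝕂) : ℝ :=
  ∑ i, ∑ j, RCLike.re ((starRingEnd 𝕂) (X i j) * Y i j)

/-- `G` is the gradient of `Φ` at `F` w.r.t. the real Frobenius inner product. -/
noncomputable def IsFrobGradientAt {d n : ℕ} {𝕂 : Type*} [RCLike 𝕂]
    (Φ : Matrix (Fin d) (Fin n) 𝕂 → ℝ) (G F : Matrix (Fin d) (Fin n) 𝕂) : Prop :=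
  DifferentiableAt ℝ Φ F ∧ ∀ X, fderiv ℝ Φ F X = frobInner G X

/-!
Differentiating `Φ_r` along the lines `F + t X` gives `∇Φ_r(F) = 4 (F F* F - F Λ)` with
`Λ = diag λᵢ`, `λᵢ = 1 - (‖fᵢ‖²/rᵢ - 1)/(4 rᵢ)`. So at a critical point every column `fᵢ` is an
eigenvector of the Hermitian frame operator `S = F F*` with eigenvalue `λᵢ`. Columns with different
`λᵢ` are orthogonal, so on the eigenspace `E_μ` the operator `S = Σᵢ fᵢ fᵢ*` reduces to the sum over
the fibre `λᵢ = μ`, and taking traces gives `μ dim E_μ = Σ_{λᵢ = μ} ‖fᵢ‖²`.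

If `Σ_{λᵢ = μ} rᵢ ≤ dim E_μ` held for every `μ`, then `Σ rᵢ = d ≥ Σ_μ dim E_μ` would force equality
for each `μ`; with `‖fᵢ‖² = rᵢ + 4 rᵢ² (1 - λᵢ)` the trace identity becomes
`(μ - 1) (dim E_μ + 4 Σ_{λᵢ = μ} rᵢ²) = 0`, so `μ = 1`. Then every `‖fᵢ‖² = rᵢ`, the trace
identity at `μ = 1` gives `dim E_1 = d`, hence `F F* = 1` and `F ∈ PF_d(r)`.
-/

section

open Matrix RCLike ComplexConjugate Module

variable {𝕂 : Type*} [RCLike 𝕂] {d n : ℕ}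

lemma frobInner_eq_re_trace (X Y : Matrix (Fin d) (Fin n) 𝕂) :
    frobInner X Y = re (Xᴴ * Y).trace := by
  simp only [frobInner, trace, diag_apply, mul_apply, conjTranspose_apply, map_sum, star_def]
  exact Finset.sum_comm

lemma frobInner_add_left (G H X : Matrix (Fin d) (Fin n) 𝕂) :
    frobInner (G + H) X = frobInner G X + frobInner H X := by
  simp only [frobInner_eq_re_trace, conjTranspose_add, Matrix.add_mul, trace_add, map_add]

lemma frobInner_sub_left (G H X : Matrix (Fin d) (Fin n) 𝕂) :
    frobInner (G - H) X = frobInner G X - frobInner H X := by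
  simp only [frobInner_eq_re_trace, conjTranspose_sub, Matrix.sub_mul, trace_sub, map_sub]

lemma frobInner_smul_left (c : ℝ) (G X : Matrix (Fin d) (Fin n) 𝕂) :
    frobInner (c • G) X = c * frobInner G X := by
  simp [frobInner_eq_re_trace, conjTranspose_smul, Matrix.smul_mul, trace_smul, smul_re]

lemma frobInner_add_right (A X Y : Matrix (Fin d) (Fin n) 𝕂) :
    frobInner A (X + Y) = frobInner A X + frobInner A Y := by
  simp only [frobInner_eq_re_trace, Matrix.mul_add, trace_add, map_add]

lemma frobInner_self (X : Matrix (Fin d) (Fin n) 𝕂) :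
    frobInner X X = ∑ i, ∑ j, ‖X i j‖ ^ 2 := by
  simp only [frobInner, RCLike.conj_mul, ← ofReal_pow, ofReal_re]

lemma eq_zero_of_frobInner_self_eq_zero {X : Matrix (Fin d) (Fin n) 𝕂}
    (h : frobInner X X = 0) : X = 0 := by
  rw [frobInner_self] at h
  ext i j
  have hi := (Finset.sum_eq_zero_iff_of_nonneg fun i _ => by positivity).1 h i (Finset.mem_univ i)
  have hij :=
    (Finset.sum_eq_zero_iff_of_nonneg fun j _ => by positivity).1 hi j (Finset.mem_univ j)
  simpa using hij

lemma ext_frobInner {G H : Matrix (Fin d) (Fin n) 𝕂}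
    (h : ∀ X, frobInner G X = frobInner H X) : G = H := by
  refine sub_eq_zero.1 (eq_zero_of_frobInner_self_eq_zero ?_)
  rw [frobInner_sub_left, h, sub_self]

lemma frobInner_mul_conjTranspose (A : Matrix (Fin d) (Fin d) 𝕂)
    (F X : Matrix (Fin d) (Fin n) 𝕂) :
    frobInner A (X * Fᴴ) = frobInner (A * F) X := by
  rw [frobInner_eq_re_trace, frobInner_eq_re_trace, ← Matrix.mul_assoc, trace_mul_comm,
    conjTranspose_mul, Matrix.mul_assoc]

lemma frobInner_conjTranspose (A B : Matrix (Fin d) (Fin n) 𝕂) :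
    frobInner Aᴴ Bᴴ = frobInner A B := by
  rw [frobInner_eq_re_trace, frobInner_eq_re_trace, conjTranspose_conjTranspose, ← conj_re,
    ← star_def, ← trace_conjTranspose, conjTranspose_mul, conjTranspose_conjTranspose,
    trace_mul_comm]

lemma Matrix.IsHermitian.frobInner_mul_conjTranspose_add {A : Matrix (Fin d) (Fin d) 𝕂}
    (hA : A.IsHermitian) (F X : Matrix (Fin d) (Fin n) 𝕂) :
    frobInner A (X * Fᴴ + F * Xᴴ) = 2 * frobInner (A * F) X := by
  have h : frobInner A (F * Xᴴ) = frobInner A (X * Fᴴ) := by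
    rw [← frobInner_conjTranspose, hA.eq, conjTranspose_mul, conjTranspose_conjTranspose]
  rw [frobInner_add_right, h, frobInner_mul_conjTranspose]
  ring

lemma frobInner_mul_diagonal (F X : Matrix (Fin d) (Fin n) 𝕂) (c : Fin n → ℝ) :
    frobInner (F * diagonal fun i => (c i : 𝕂)) X =
      ∑ i, c i * ∑ j, re (conj (F j i) * X j i) := by
  simp only [frobInner, mul_diagonal, map_mul, conj_ofReal, Finset.mul_sum]
  rw [Finset.sum_comm]
  refine Finset.sum_congr rfl fun i _ => Finset.sum_congr rfl fun j _ => ?_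
  rw [mul_comm (conj (F j i)), mul_assoc, re_ofReal_mul]

lemma hasDerivAt_const_add_smul {E : Type*} [NormedAddCommGroup E] [NormedSpace ℝ E] (F X : E)
    (t : ℝ) : HasDerivAt (fun s : ℝ => F + s • X) X t :=
  (((hasDerivAt_id t).smul_const X).const_add F).congr_deriv (one_smul ℝ X)

lemma hasDerivAt_add_smul_add_sq_smul {E : Type*} [NormedAddCommGroup E] [NormedSpace ℝ E]
    (A B C : E) : HasDerivAt (fun t : ℝ => A + t • B + t ^ 2 • C) B 0 := by
  simpa [add_assoc] using ((hasDerivAt_id (0 : ℝ)).smul_const B).add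
      ((hasDerivAt_pow 2 (0 : ℝ)).smul_const C) |>.const_add A

lemma hasDerivAt_sum_norm_sq {ι : Type*} [Fintype ι] {v : ℝ → ι → 𝕂} {v' : ι → 𝕂} {t : ℝ}
    (h : HasDerivAt v v' t) :
    HasDerivAt (fun s => ∑ i, ‖v s i‖ ^ 2) (2 * ∑ i, re (conj (v t i) * v' i)) t := by
  rw [Finset.mul_sum]
  refine HasDerivAt.fun_sum fun i _ => ?_
  simpa [real_inner_eq_re_inner 𝕂, inner_apply, mul_comm] using (hasDerivAt_pi.1 h i).norm_sq

lemma hasDerivAt_sum_sum_norm_sq {M : ℝ → Matrix (Fin d) (Fin n) 𝕂}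
    {M' : Matrix (Fin d) (Fin n) 𝕂} {t : ℝ} (h : HasDerivAt M M' t) :
    HasDerivAt (fun s => ∑ i, ∑ j, ‖M s i j‖ ^ 2) (2 * frobInner (M t) M') t := by
  rw [frobInner, Finset.mul_sum]
  exact HasDerivAt.fun_sum fun i _ => hasDerivAt_sum_norm_sq (hasDerivAt_pi.1 h i)

lemma IsFrobGradientAt.eq_of_hasDerivAt {Φ : Matrix (Fin d) (Fin n) 𝕂 → ℝ}
    {G H F : Matrix (Fin d) (Fin n) 𝕂} (hG : IsFrobGradientAt Φ G F)
    (hH : ∀ X, HasDerivAt (fun t : ℝ => Φ (F + t • X)) (frobInner H X) 0) : G = H := by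
  refine ext_frobInner fun X => ?_
  have hΦ : HasFDerivAt Φ (fderiv ℝ Φ F) (F + (0 : ℝ) • X) := by
    simpa using hG.1.hasFDerivAt
  rw [← hG.2 X]
  exact (hΦ.comp_hasDerivAt 0 (hasDerivAt_const_add_smul F X 0)).unique (hH X)

lemma add_smul_mul_conjTranspose_sub_one (F X : Matrix (Fin d) (Fin n) 𝕂) (t : ℝ) :
    (F + t • X) * (F + t • X)ᴴ - 1 =
      (F * Fᴴ - 1) + t • (X * Fᴴ + F * Xᴴ) + t ^ 2 • (X * Xᴴ) := by
  simp only [conjTranspose_add, conjTranspose_smul, star_trivial, Matrix.add_mul, Matrix.mul_add,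
    Matrix.smul_mul, Matrix.mul_smul, smul_add, smul_smul]
  module

noncomputable def frameEigenvalue (r : Fin n → ℝ) (F : Matrix (Fin d) (Fin n) 𝕂) (i : Fin n) :
    ℝ :=
  1 - ((∑ j, ‖F j i‖ ^ 2) / r i - 1) / (4 * r i)

noncomputable def frameEnergyGrad (r : Fin n → ℝ) (F : Matrix (Fin d) (Fin n) 𝕂) :
    Matrix (Fin d) (Fin n) 𝕂 :=
  (4 : ℝ) • (F * Fᴴ * F - F * diagonal fun i => (frameEigenvalue r F i : 𝕂))

lemma frameEnergyGrad_eq (r : Fin n → ℝ) (F : Matrix (Fin d) (Fin n) 𝕂) :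
    frameEnergyGrad r F = (4 : ℝ) • ((F * Fᴴ - 1) * F) +
      F * diagonal fun i => ((((∑ j, ‖F j i‖ ^ 2) / r i - 1) / r i : ℝ) : 𝕂) := by
  have hdiag : (diagonal fun i => ((((∑ j, ‖F j i‖ ^ 2) / r i - 1) / r i : ℝ) : 𝕂)) =
      (4 : ℝ) • (1 - diagonal fun i => (frameEigenvalue r F i : 𝕂)) := by
    ext i j
    by_cases hij : i = j
    · subst hij
      simp only [frameEigenvalue, Matrix.smul_apply, Matrix.sub_apply, one_apply_eq,
        diagonal_apply_eq, real_smul_eq_coe_mul]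
      push_cast
      ring
    · simp [hij]
  rw [frameEnergyGrad, hdiag, Matrix.mul_smul, ← smul_add, Matrix.sub_mul, Matrix.one_mul,
    Matrix.mul_sub, Matrix.mul_one]
  congr 1
  abel

lemma hasDerivAt_totalFrameEnergy_line (r : Fin n → ℝ) (F X : Matrix (Fin d) (Fin n) 𝕂) :
    HasDerivAt (fun t : ℝ => totalFrameEnergy r (F + t • X))
      (frobInner (frameEnergyGrad r F) X) 0 := by
  have hline := hasDerivAt_const_add_smul F X 0
  have hgram :
      HasDerivAt (fun t : ℝ => (F + t • X) * (F + t • X)ᴴ - 1) (X * Fᴴ + F * Xᴴ) 0 := by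
    simp_rw [add_smul_mul_conjTranspose_sub_one]
    exact hasDerivAt_add_smul_add_sq_smul _ _ _
  have hcol (i : Fin n) := hasDerivAt_sum_norm_sq (v := fun t j => (F + t • X) j i)
    (hasDerivAt_pi.2 fun j => hasDerivAt_pi.1 (hasDerivAt_pi.1 hline j) i)
  have htot := (hasDerivAt_sum_sum_norm_sq hgram).add <| HasDerivAt.const_mul (1 / 4) <|
    HasDerivAt.fun_sum (u := Finset.univ) fun i _ => (((hcol i).div_const (r i)).sub_const 1).pow 2
  simp only [zero_smul, add_zero] at htot
  refine htot.congr_deriv ?_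
  have hA : (F * Fᴴ - 1).IsHermitian :=
    (isHermitian_mul_conjTranspose_self F).sub isHermitian_one
  rw [frameEnergyGrad_eq, frobInner_add_left, frobInner_smul_left, frobInner_mul_diagonal,
    hA.frobInner_mul_conjTranspose_add, Finset.mul_sum]
  simp only [Nat.cast_ofNat]
  congr 1
  · ring
  · refine Finset.sum_congr rfl fun i _ => ?_
    ring

lemma IsFrobGradientAt.eq_frameEnergyGrad {r : Fin n → ℝ} {G F : Matrix (Fin d) (Fin n) 𝕂}
    (h : IsFrobGradientAt (totalFrameEnergy r) G F) : G = frameEnergyGrad r F :=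
  h.eq_of_hasDerivAt (hasDerivAt_totalFrameEnergy_line r F)

lemma Matrix.IsHermitian.dotProduct_eq_zero_of_mem_eigenspace {ι : Type*} [Fintype ι]
    {A : Matrix ι ι 𝕂} (hA : A.IsHermitian) {a b : ℝ} (hab : a ≠ b) {x y : ι → 𝕂}
    (hx : x ∈ End.eigenspace A.mulVecLin (algebraMap ℝ 𝕂 a))
    (hy : y ∈ End.eigenspace A.mulVecLin (algebraMap ℝ 𝕂 b)) :
    star x ⬝ᵥ y = 0 := by
  rw [End.mem_eigenspace_iff, mulVecLin_apply, algebraMap_smul] at hx hy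
  have key : (b : 𝕂) * (star x ⬝ᵥ y) = a * (star x ⬝ᵥ y) := by
    calc (b : 𝕂) * (star x ⬝ᵥ y) = star x ⬝ᵥ A *ᵥ y := by
          rw [hy, dotProduct_smul, real_smul_eq_coe_mul]
      _ = star (A *ᵥ x) ⬝ᵥ y := by
          rw [dotProduct_mulVec, star_mulVec, hA.eq]
      _ = a * (star x ⬝ᵥ y) := by
          rw [hx, star_smul, star_trivial, smul_dotProduct, real_smul_eq_coe_mul]
  have hne : (b : 𝕂) ≠ a := by exact_mod_cast hab.symm
  have hsub : ((b : 𝕂) - a) * (star x ⬝ᵥ y) = 0 := by rw [sub_mul, key, sub_self]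
  exact (mul_eq_zero.mp hsub).resolve_left (sub_ne_zero.mpr hne)

lemma iSupIndep.sum_finrank_le {K V ι : Type*} [DivisionRing K] [AddCommGroup V] [Module K V]
    [FiniteDimensional K V] {E : ι → Submodule K V} (hE : iSupIndep E) (s : Finset ι) :
    ∑ i ∈ s, finrank K (E i) ≤ finrank K V := by
  classical
  have hs := hE.comp (Subtype.val_injective : Function.Injective (Subtype.val : s → ι))
  calc ∑ i ∈ s, finrank K (E i) = ∑ i : s, finrank K (E i) := (Finset.sum_coe_sort s _).symm
    _ = finrank K (DirectSum s fun i => E i) := (Module.finrank_directSum K _).symm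
    _ ≤ finrank K V := LinearMap.finrank_le_finrank_of_injective hs.dfinsupp_lsum_injective

lemma mul_finrank_eq_sum_of_forall_mem {K V ι : Type*} [Field K] [AddCommGroup V] [Module K V]
    {E : Submodule K V} [FiniteDimensional K E] {μ : K} (s : Finset ι) (φ : ι → V →ₗ[K] K)
    (v : ι → V) (hv : ∀ i ∈ s, v i ∈ E) (hE : ∀ x ∈ E, ∑ i ∈ s, φ i x • v i = μ • x) :
    μ * finrank K E = ∑ i ∈ s, φ i (v i) := by
  have hop : μ • (LinearMap.id : E →ₗ[K] E) =
      ∑ i ∈ s.attach, (φ i ∘ₗ E.subtype).smulRight ⟨v i, hv i i.2⟩ := by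
    ext x
    simp [Finset.sum_attach s fun i => φ i x • v i, hE x x.2]
  have htr := congrArg (LinearMap.trace K E) hop
  simp only [map_smul, LinearMap.trace_id, map_sum, LinearMap.trace_smulRight, smul_eq_mul]
    at htr
  rw [htr, ← Finset.sum_attach s]
  rfl

lemma sum_fiber_eq_finrank_eigenspace {V : Type*} [AddCommGroup V] [Module 𝕂 V]
    [FiniteDimensional 𝕂 V] {ι : Type*} [Fintype ι] {f : End 𝕂 V} {r lam : ι → ℝ}
    (hsum : ∑ i, r i = finrank 𝕂 V)
    (hle : ∀ μ ∈ Finset.univ.image lam,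
      ∑ i with lam i = μ, r i ≤ finrank 𝕂 (f.eigenspace (algebraMap ℝ 𝕂 μ))) :
    ∀ μ ∈ Finset.univ.image lam,
      ∑ i with lam i = μ, r i = finrank 𝕂 (f.eigenspace (algebraMap ℝ 𝕂 μ)) := by
  have hdim := (f.eigenspaces_iSupIndep.comp (algebraMap ℝ 𝕂).injective).sum_finrank_le
    (Finset.univ.image lam)
  have hfib : ∑ μ ∈ Finset.univ.image lam, ∑ i with lam i = μ, r i = ∑ i, r i :=
    Finset.sum_fiberwise_of_maps_to (fun i _ => Finset.mem_image_of_mem lam (Finset.mem_univ i)) r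
  refine (Finset.sum_eq_sum_iff_of_le hle).1 (le_antisymm (Finset.sum_le_sum hle) ?_)
  rw [hfib, hsum]
  exact_mod_cast hdim

lemma mul_conjTranspose_mulVec_eq_sum (F : Matrix (Fin d) (Fin n) 𝕂) (x : Fin d → 𝕂) :
    (F * Fᴴ) *ᵥ x = ∑ i, (star (Fᵀ i) ⬝ᵥ x) • Fᵀ i := by
  rw [← mulVec_mulVec, mulVec_eq_sum]
  simp only [op_smul_eq_smul]
  rfl

variable {r : Fin n → ℝ} {F : Matrix (Fin d) (Fin n) 𝕂}

lemma mem_eigenspace_frameEigenvalue (hG : frameEnergyGrad r F = 0) (i : Fin n) :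
    Fᵀ i ∈ End.eigenspace (F * Fᴴ).mulVecLin (algebraMap ℝ 𝕂 (frameEigenvalue r F i)) := by
  have h : F * Fᴴ * F = F * diagonal fun i => (frameEigenvalue r F i : 𝕂) := by
    rw [frameEnergyGrad, smul_eq_zero, sub_eq_zero] at hG
    exact hG.resolve_left four_ne_zero
  rw [End.mem_eigenspace_iff, mulVecLin_apply, algebraMap_smul]
  ext k
  change (F * Fᴴ * F) k i = _
  rw [h, mul_diagonal, Pi.smul_apply, real_smul_eq_coe_mul, mul_comm]
  rfl

open scoped ComplexOrder in
lemma column_mem_eigenspace_iff (hG : frameEnergyGrad r F = 0) {i : Fin n} (hi : Fᵀ i ≠ 0)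
    (μ : ℝ) :
    Fᵀ i ∈ End.eigenspace (F * Fᴴ).mulVecLin (algebraMap ℝ 𝕂 μ) ↔
      frameEigenvalue r F i = μ := by
  refine ⟨fun h => ?_, fun h => h ▸ mem_eigenspace_frameEigenvalue hG i⟩
  by_contra hne
  exact hi (dotProduct_star_self_eq_zero.1 <| (isHermitian_mul_conjTranspose_self F)
    |>.dotProduct_eq_zero_of_mem_eigenspace hne (mem_eigenspace_frameEigenvalue hG i) h)

lemma mul_finrank_eigenspace_eq_sum (hG : frameEnergyGrad r F = 0) (μ : ℝ) :
    μ * finrank 𝕂 (End.eigenspace (F * Fᴴ).mulVecLin (algebraMap ℝ 𝕂 μ)) =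
      ∑ i with frameEigenvalue r F i = μ, ∑ j, ‖F j i‖ ^ 2 := by
  let φ (i : Fin n) : (Fin d → 𝕂) →ₗ[𝕂] 𝕂 := LinearMap.proj i ∘ₗ Fᴴ.mulVecLin
  have hφ (i : Fin n) (x : Fin d → 𝕂) : φ i x = star (Fᵀ i) ⬝ᵥ x := rfl
  have hE (x : Fin d → 𝕂) (hx : x ∈ End.eigenspace (F * Fᴴ).mulVecLin (algebraMap ℝ 𝕂 μ)) :
      ∑ i with frameEigenvalue r F i = μ, φ i x • Fᵀ i = algebraMap ℝ 𝕂 μ • x := by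
    rw [← End.mem_eigenspace_iff.1 hx, mulVecLin_apply, mul_conjTranspose_mulVec_eq_sum]
    refine Finset.sum_filter_of_ne fun i _ hi => ?_
    by_contra hne
    rw [hφ, (isHermitian_mul_conjTranspose_self F).dotProduct_eq_zero_of_mem_eigenspace hne
      (mem_eigenspace_frameEigenvalue hG i) hx, zero_smul] at hi
    exact hi rfl
  have hnorm (i : Fin n) : φ i (Fᵀ i) = ((∑ j, ‖F j i‖ ^ 2 : ℝ) : 𝕂) := by
    simp only [hφ, dotProduct, Pi.star_apply, transpose_apply, star_def, RCLike.conj_mul,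
      ofReal_sum, ofReal_pow]
  have key := mul_finrank_eq_sum_of_forall_mem _ φ (fun i => Fᵀ i)
    (fun i hi => (Finset.mem_filter.1 hi).2 ▸ mem_eigenspace_frameEigenvalue hG i) hE
  simp only [hnorm, algebraMap_eq_ofReal] at key
  exact_mod_cast key

lemma sum_norm_sq_eq_of_ne_zero {i : Fin n} (hr : r i ≠ 0) :
    ∑ j, ‖F j i‖ ^ 2 = r i + 4 * r i ^ 2 * (1 - frameEigenvalue r F i) := by
  rw [frameEigenvalue]
  field_simp
  ring

lemma frameEigenvalue_eq_one (hG : frameEnergyGrad r F = 0) (hr : ∀ i, 0 < r i) (i : Fin n)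
    (h : ∑ j with frameEigenvalue r F j = frameEigenvalue r F i, r j =
      finrank 𝕂
        (End.eigenspace (F * Fᴴ).mulVecLin (algebraMap ℝ 𝕂 (frameEigenvalue r F i)))) :
    frameEigenvalue r F i = 1 := by
  set μ := frameEigenvalue r F i
  set K : ℝ := (finrank 𝕂 (End.eigenspace (F * Fᴴ).mulVecLin (algebraMap ℝ 𝕂 μ)) : ℝ)
  have htr : μ * K = K + 4 * (1 - μ) * ∑ j with frameEigenvalue r F j = μ, r j ^ 2 := by
    rw [mul_finrank_eigenspace_eq_sum hG μ, ← h, Finset.mul_sum, ← Finset.sum_add_distrib]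
    refine Finset.sum_congr rfl fun j hj => ?_
    rw [sum_norm_sq_eq_of_ne_zero (hr j).ne', (Finset.mem_filter.1 hj).2]
    ring
  have hQ : 0 < ∑ j with frameEigenvalue r F j = μ, r j ^ 2 :=
    Finset.sum_pos (fun j _ => pow_pos (hr j) 2) ⟨i, by simp [μ]⟩
  have hprod : (μ - 1) * (K + 4 * ∑ j with frameEigenvalue r F j = μ, r j ^ 2) = 0 := by
    linear_combination htr
  exact sub_eq_zero.1 ((mul_eq_zero.1 hprod).resolve_right (by positivity))

lemma mul_conjTranspose_eq_one (hG : frameEnergyGrad r F = 0)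
    (hone : ∀ i, frameEigenvalue r F i = 1) (hsum : ∑ i, ∑ j, ‖F j i‖ ^ 2 = d) :
    F * Fᴴ = 1 := by
  have htr := mul_finrank_eigenspace_eq_sum hG 1
  simp only [hone, Finset.filter_true, one_mul, hsum, Nat.cast_inj] at htr
  have htop : End.eigenspace (F * Fᴴ).mulVecLin (algebraMap ℝ 𝕂 1) = ⊤ :=
    Submodule.eq_top_of_finrank_eq (by rw [htr, finrank_fin_fun])
  refine mulVec_injective (funext fun x => ?_)
  have hx := End.mem_eigenspace_iff.1 (htop ▸ Submodule.mem_top : x ∈ End.eigenspace _ _)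
  simpa using hx

end

open Classical in
theorem stmt_12_general (d n : ℕ) (𝕂 : Type*) [RCLike 𝕂]
    (r : Fin n → ℝ) (hr : ∀ i, 0 < r i) (hadm : AdmissibleR d n r)
    (F : Matrix (Fin d) (Fin n) 𝕂)
    (hcrit : IsFrobGradientAt (totalFrameEnergy r) (0 : Matrix (Fin d) (Fin n) 𝕂) F)
    (hcols : ∀ i, ∃ k, F k i ≠ 0)
    (hnotPF : ¬(F * Fᴴ = 1 ∧ ∀ i, ∑ j, ‖F j i‖ ^ 2 = r i)) :
    ∃ lam : ℝ,
      Module.End.HasEigenvalue ((F * Fᴴ).mulVecLin) (algebraMap ℝ 𝕂 lam) ∧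
      (Module.finrank 𝕂
          (Module.End.eigenspace ((F * Fᴴ).mulVecLin) (algebraMap ℝ 𝕂 lam)) : ℝ) <
        ∑ i, if (fun k => F k i) ∈
            Module.End.eigenspace ((F * Fᴴ).mulVecLin) (algebraMap ℝ 𝕂 lam)
          then r i else 0 := by
  have hG : frameEnergyGrad r F = 0 := hcrit.eq_frameEnergyGrad.symm
  have hcol (i : Fin n) : Fᵀ i ≠ 0 := fun h => (hcols i).elim fun k hk => hk (congrFun h k)
  by_contra! hcon
  have hle : ∀ μ ∈ Finset.univ.image (frameEigenvalue r F),
      ∑ i with frameEigenvalue r F i = μ, r i ≤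
        Module.finrank 𝕂 (Module.End.eigenspace (F * Fᴴ).mulVecLin (algebraMap ℝ 𝕂 μ)) := by
    intro μ hμ
    obtain ⟨i, -, rfl⟩ := Finset.mem_image.1 hμ
    have hi := hcon _ (Module.End.hasEigenvalue_of_hasEigenvector
      ⟨mem_eigenspace_frameEigenvalue hG i, hcol i⟩)
    rwa [Finset.sum_filter, ← Finset.sum_congr rfl fun j _ =>
      if_congr (column_mem_eigenspace_iff hG (hcol j) _) rfl rfl]
  have hfib := sum_fiber_eq_finrank_eigenspace (by rw [hadm.1, Module.finrank_fin_fun]) hle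
  have hone (i : Fin n) : frameEigenvalue r F i = 1 :=
    frameEigenvalue_eq_one hG hr i (hfib _ (Finset.mem_image_of_mem _ (Finset.mem_univ i)))
  have hnorm (i : Fin n) : ∑ j, ‖F j i‖ ^ 2 = r i := by
    rw [sum_norm_sq_eq_of_ne_zero (hr i).ne', hone]
    ring
  exact hnotPF ⟨mul_conjTranspose_eq_one hG hone (by simp_rw [hnorm]; exact hadm.1), hnorm⟩

open Classical in
/-- if `F` is a critical point of `Φ_r` with all columns nonzero and
`F ∉ PF_d(r)`, then some real eigenvalue `λ` of the frame operator `F Fᴴ` has an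
eigenspace `E` with `Σ_{i : fᵢ ∈ E} rᵢ > dim E`. -/
theorem stmt_12 (d n : ℕ) (hd : 1 ≤ d) (hdn : d ≤ n) (𝕂 : Type*) [RCLike 𝕂]
    (r : Fin n → ℝ) (hr : ∀ i, 0 < r i) (hadm : AdmissibleR d n r)
    (F : Matrix (Fin d) (Fin n) 𝕂)
    (hcrit : IsFrobGradientAt (totalFrameEnergy r) (0 : Matrix (Fin d) (Fin n) 𝕂) F)
    (hcols : ∀ i, ∃ k, F k i ≠ 0)
    (hnotPF : ¬(F * Fᴴ = 1 ∧ ∀ i, ∑ j, ‖F j i‖ ^ 2 = r i)) :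
    ∃ lam : ℝ,
      Module.End.HasEigenvalue ((F * Fᴴ).mulVecLin) (algebraMap ℝ 𝕂 lam) ∧
      (Module.finrank 𝕂
          (Module.End.eigenspace ((F * Fᴴ).mulVecLin) (algebraMap ℝ 𝕂 lam)) : ℝ) <
        ∑ i, if (fun k => F k i) ∈
            Module.End.eigenspace ((F * Fᴴ).mulVecLin) (algebraMap ℝ 𝕂 lam)
          then r i else 0 :=
  stmt_12_general d n 𝕂 r hr hadm F hcrit hcols hnotPF
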